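/- arXiv:1807.11183 — 2 statements merged into one kernel-verified Lean document; each statement's English description precedes it below -/
import Mathlib

section
/- For every n ≥ 1, an n-tuple (a_1, ..., a_n) is the signature of a spanning tree of the n-cube Q_n if and only if it is the signature of a section of the set of nonempty subsets of [n]. -/
open SimpleGraph

/-- The `n`-cube: vertices are the subsets of `[n]` (modelled as `Finset (Fin n)`),
with an edge between `X` and `Y` iff their symmetric difference is a singleton. -/
def cube (n : ℕ) : SimpleGraph (Finset (Fin n)) where
  Adj X Y := (symmDiff X Y).card = 1
  symm := by
    constructor
    intro X Y h
    rwa [symmDiff_comm]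
  loopless := by
    constructor
    intro X h
    simp [symmDiff_self, Finset.bot_eq_empty] at h

/-- `T` is a spanning tree of `G` (both graphs on the same vertex set). -/
def IsSpanningTreeOf {V : Type*} (T G : SimpleGraph V) : Prop :=
  T ≤ G ∧ T.IsTree

/-- The edge `e` of the `n`-cube is in direction `i`. -/
def edgeInDir {n : ℕ} (i : Fin n) (e : Sym2 (Finset (Fin n))) : Prop :=
  ∃ X : Finset (Fin n), e = s(X, symmDiff X {i})

/-- The number of edges of `T` in direction `i`. -/
noncomputable def dirCount {n : ℕ} (T : SimpleGraph (Finset (Fin n))) (i : Fin n) : ℕ :=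
  {e | e ∈ T.edgeSet ∧ edgeInDir i e}.ncard

/-- `a` is the signature of the tree `T`. -/
def HasSig {n : ℕ} (T : SimpleGraph (Finset (Fin n))) (a : Fin n → ℕ) : Prop :=
  ∀ i, dirCount T i = a i

/-- `a` is a signature of `Q_n`, i.e. the signature of some spanning tree of the `n`-cube. -/
def IsSignature (n : ℕ) (a : Fin n → ℕ) : Prop :=
  ∃ T, IsSpanningTreeOf T (cube n) ∧ HasSig T a

/-- A section of the set of nonempty subsets of `[n]`. -/
def IsSection {n : ℕ} (ψ : Finset (Fin n) → Fin n) : Prop :=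
  ∀ X : Finset (Fin n), X.Nonempty → ψ X ∈ X

/-- The number of nonempty subsets on which the section `ψ` takes the value `i`. -/
noncomputable def secCount {n : ℕ} (ψ : Finset (Fin n) → Fin n) (i : Fin n) : ℕ :=
  {X : Finset (Fin n) | X.Nonempty ∧ ψ X = i}.ncard

/-- The tuple `a` reduces over `R` : `Σ_{i ∈ R} a i = 2^|R| - 1`. -/
def ReducesOver {n : ℕ} (a : Fin n → ℕ) (R : Finset (Fin n)) : Prop :=
  ∑ i ∈ R, a i = 2 ^ R.card - 1

/-- `a` is reducible: it reduces over some proper nonempty subset of `[n]`. -/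
def IsReducibleSig {n : ℕ} (a : Fin n → ℕ) : Prop :=
  ∃ R : Finset (Fin n), R.Nonempty ∧ R ≠ Finset.univ ∧ ReducesOver a R

/-- `a` is irreducible. -/
def IsIrreducibleSig {n : ℕ} (a : Fin n → ℕ) : Prop := ¬ IsReducibleSig a

/-- `T` is upright: every vertex `X` is at distance `|X|` in `T` from the root `∅`. -/
def IsUpright {n : ℕ} (T : SimpleGraph (Finset (Fin n))) : Prop :=
  ∀ X : Finset (Fin n), T.dist X ∅ = X.card

/-- `ψ` is the section associated to the upright tree `T`: for each nonempty `X`,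
`ψ X ∈ X` and `X - {ψ X}` is the next vertex after `X` on the path in `T` from `X` to `∅`. -/
def IsTreeSection {n : ℕ} (T : SimpleGraph (Finset (Fin n))) (ψ : Finset (Fin n) → Fin n) : Prop :=
  ∀ X : Finset (Fin n), X.Nonempty → ψ X ∈ X ∧ T.Adj X (X.erase (ψ X))

/-- The minimum of `Σ_{i ∈ K} a i` over the sets `K` of `k` directions. -/
noncomputable def minSum {n : ℕ} (a : Fin n → ℕ) (k : ℕ) : ℕ :=
  sInf {m : ℕ | ∃ K : Finset (Fin n), K.card = k ∧ ∑ i ∈ K, a i = m}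

/-- The excess of `a` at `k`. -/
noncomputable def excess {n : ℕ} (a : Fin n → ℕ) (k : ℕ) : ℤ :=
  (minSum a k : ℤ) - (2 ^ k - 1)

/-- The result of sliding the edge `e` in direction `i`. -/
def slideEdge {n : ℕ} (i : Fin n) (e : Sym2 (Finset (Fin n))) : Sym2 (Finset (Fin n)) :=
  Sym2.map (fun X => symmDiff X {i}) e

/-- The edge `e` of the spanning tree `T` of `Q_n` is `i`-slidable. -/
def Slidable (n : ℕ) (T : SimpleGraph (Finset (Fin n))) (i : Fin n)
    (e : Sym2 (Finset (Fin n))) : Prop :=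
  e ∈ T.edgeSet ∧
    IsSpanningTreeOf (SimpleGraph.fromEdgeSet ((T.edgeSet \ {e}) ∪ {slideEdge i e})) (cube n)

/-- The edge set `E` is (the edge set of) a spanning tree of the subgraph of the
`n`-cube induced on the vertex set `s`. -/
def IsSpanningTreeOn (n : ℕ) (s : Set (Finset (Fin n))) (E : Set (Sym2 (Finset (Fin n)))) : Prop :=
  E ⊆ (cube n).edgeSet ∧ (∀ e ∈ E, ∀ v ∈ e, v ∈ s) ∧
    ((SimpleGraph.fromEdgeSet E).induce s).IsTree

/-- The edges of `T` with both endpoints in `s`. -/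
def edgesWithin {n : ℕ} (s : Set (Finset (Fin n))) (T : SimpleGraph (Finset (Fin n))) :
    Set (Sym2 (Finset (Fin n))) :=
  {e | e ∈ T.edgeSet ∧ ∀ v ∈ e, v ∈ s}

/-- The edge `e` of the tree with edge set `E`, spanning the subgraph of the `n`-cube
induced on `s`, is `i`-slidable. -/
def SlidableOn (n : ℕ) (s : Set (Finset (Fin n))) (E : Set (Sym2 (Finset (Fin n))))
    (i : Fin n) (e : Sym2 (Finset (Fin n))) : Prop :=
  e ∈ E ∧ IsSpanningTreeOn n s ((E \ {e}) ∪ {slideEdge i e})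

/-- The number of edges of `T` in direction `i` with both endpoints in `s`. -/
noncomputable def dirCountOn {n : ℕ} (s : Set (Finset (Fin n)))
    (T : SimpleGraph (Finset (Fin n))) (i : Fin n) : ℕ :=
  {e | e ∈ T.edgeSet ∧ edgeInDir i e ∧ ∀ v ∈ e, v ∈ s}.ncard

/-- `T'` is a spanning tree of the `n`-cube obtained from the spanning tree `T` by a
single edge slide. -/
def SlideStep (n : ℕ) (T T' : SimpleGraph (Finset (Fin n))) : Prop :=
  IsSpanningTreeOf T (cube n) ∧ IsSpanningTreeOf T' (cube n) ∧
    ∃ (i : Fin n) (e : Sym2 (Finset (Fin n))), e ∈ T.edgeSet ∧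
      T' = SimpleGraph.fromEdgeSet ((T.edgeSet \ {e}) ∪ {slideEdge i e})

/-- The trees `T` and `T'` are related by a single edge slide. -/
def SlideAdj (n : ℕ) (T T' : SimpleGraph (Finset (Fin n))) : Prop :=
  T ≠ T' ∧ ∃ (i : Fin n) (e : Sym2 (Finset (Fin n))),
    (e ∈ T.edgeSet ∧ T' = SimpleGraph.fromEdgeSet ((T.edgeSet \ {e}) ∪ {slideEdge i e})) ∨
    (e ∈ T'.edgeSet ∧ T = SimpleGraph.fromEdgeSet ((T'.edgeSet \ {e}) ∪ {slideEdge i e}))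

/-- The spanning trees of the `n`-cube. -/
def SpanningTrees (n : ℕ) := {T : SimpleGraph (Finset (Fin n)) // IsSpanningTreeOf T (cube n)}

/-- The edge slide graph `E(n)` of the `n`-cube. -/
def eslide (n : ℕ) : SimpleGraph (SpanningTrees n) where
  Adj T T' := SlideAdj n T.1 T'.1
  symm := by
    constructor
    rintro T T' ⟨hne, i, e, h⟩
    exact ⟨hne.symm, i, e, h.symm⟩
  loopless := by
    constructor
    rintro T ⟨hne, -⟩
    exact hne rfl

/-- The projection `π_R(T)` of `T` to `Q_R`: a graph on the subsets of `R`, with `A`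
adjacent to `B` iff some edge of `T` projects to `{A, B}`. -/
def projTree (n : ℕ) (R : Finset (Fin n)) (T : SimpleGraph (Finset (Fin n))) :
    SimpleGraph ↥{W : Finset (Fin n) | W ⊆ R} where
  Adj A B := A.1 ≠ B.1 ∧ ∃ U V : Finset (Fin n), T.Adj U V ∧ U ∩ R = A.1 ∧ V ∩ R = B.1
  symm := by
    constructor
    rintro A B ⟨hne, U, V, hUV, hU, hV⟩
    exact ⟨hne.symm, V, U, hUV.symm, hV, hU⟩
  loopless := by
    constructor
    rintro A ⟨hne, -⟩
    exact hne rfl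

/-- The projected edge set `π_R(T)`: images under `π_R` of the edges of `T` in
directions belonging to `R`. -/
def projEdges {n : ℕ} (R : Finset (Fin n)) (T : SimpleGraph (Finset (Fin n))) :
    Set (Sym2 (Finset (Fin n))) :=
  {f | ∃ e ∈ T.edgeSet, (∃ i ∈ R, edgeInDir i e) ∧ f = Sym2.map (· ∩ R) e}

/-- The decomposition `T ↦ (F_T, (T(R,X))_{X ⊆ R})` of a tree reducing over `R`. -/
def decompose (n : ℕ) (R : Finset (Fin n)) (T : SimpleGraph (Finset (Fin n))) :
    Set (Sym2 (Finset (Fin n))) ×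
      ((X : Finset (Fin n)) → X ⊆ R → SimpleGraph ↥{W : Finset (Fin n) | W ∩ R = X}) :=
  ⟨{e | e ∈ T.edgeSet ∧ ∃ i ∈ R, edgeInDir i e},
   fun X _ => T.induce {W : Finset (Fin n) | W ∩ R = X}⟩

/-- `s` is the least index such that `ε_k(a) = 0` for all `s ≤ k ≤ n`; i.e. the
entries of (an ordered) `a` with index `≤ s` form the unsaturated part of `a`. -/
def UnsatIndex (n : ℕ) (a : Fin n → ℕ) (s : ℕ) : Prop :=
  (∀ k, s ≤ k → k ≤ n → excess a k = 0) ∧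
    ∀ s' < s, ¬ (∀ k, s' ≤ k → k ≤ n → excess a k = 0)

/-- The restriction of `a` to its first `s` entries is reducible (as a tuple of length `s`). -/
def ReducibleBelow {n : ℕ} (a : Fin n → ℕ) (s : ℕ) : Prop :=
  ∃ R : Finset (Fin n), R.Nonempty ∧ (∀ i ∈ R, (i : ℕ) < s) ∧ R.card < s ∧
    ∑ i ∈ R, a i = 2 ^ R.card - 1

/-- `a` is strictly reducible: it is reducible and its unsaturated part is reducible. -/
def StrictlyReducible (n : ℕ) (a : Fin n → ℕ) : Prop :=
  IsReducibleSig a ∧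
    ∃ (σ : Equiv.Perm (Fin n)) (s : ℕ), Monotone (a ∘ σ) ∧
      UnsatIndex n (a ∘ σ) s ∧ ReducibleBelow (a ∘ σ) s

/-!
A section `ψ` gives the tree joining each nonempty `X` to `X \ {ψ X}`: every vertex descends
to `∅`, and there are `2^n - 1` edges, the one at `X` in direction `ψ X`.

Conversely, let `T` be a spanning tree. For `S ⊆ [n]` the map `X ↦ X ∩ S` sends `T` onto a
connected graph on the `2^|S|` subsets of `S` whose edges come from edges of `T` in directions
of `S`, so `Σ_{i ∈ S} a_i ≥ 2^|S| - 1`. This is Hall's condition for matching every nonempty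
`X` to a slot `(i, k)` with `i ∈ X` and `k < a_i`; both sides have `2^n - 1` elements, so the
matching is perfect and `X ↦ i` is a section of signature `a`.
-/

open Finset

theorem SimpleGraph.Connected.of_surjective_of_adj {V W : Type*} {G : SimpleGraph V}
    {H : SimpleGraph W} (hG : G.Connected) {f : V → W} (hf : Function.Surjective f)
    (hadj : ∀ u v, G.Adj u v → f u = f v ∨ H.Adj (f u) (f v)) : H.Connected := by
  have : Nonempty W := hG.nonempty.map f
  refine ⟨fun x y => ?_⟩
  obtain ⟨u, rfl⟩ := hf x
  obtain ⟨v, rfl⟩ := hf y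
  rw [SimpleGraph.reachable_iff_reflTransGen]
  refine Relation.ReflTransGen.lift' f (fun u v huv => ?_) _ _
    ((SimpleGraph.reachable_iff_reflTransGen u v).mp (hG.preconnected u v))
  rcases hadj u v huv with h | h
  · simp only [Function.onFun, h]; rfl
  · exact Relation.ReflTransGen.single h

theorem Finset.card_powerset_erase_empty {α : Type*} [DecidableEq α] (s : Finset α) :
    #(s.powerset.erase ∅) = 2 ^ #s - 1 := by
  rw [card_erase_of_mem (empty_mem_powerset s), card_powerset]

section Cube

variable {n : ℕ}

theorem edgeInDir_mk_iff {i : Fin n} {A B : Finset (Fin n)} :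
    edgeInDir i s(A, B) ↔ symmDiff A B = {i} := by
  constructor
  · rintro ⟨X, hX⟩
    rcases Sym2.eq_iff.mp hX with ⟨rfl, rfl⟩ | ⟨rfl, rfl⟩
    · exact symmDiff_symmDiff_cancel_left _ _
    · rw [symmDiff_comm, symmDiff_symmDiff_cancel_left]
  · intro h
    exact ⟨A, by rw [← h, symmDiff_symmDiff_cancel_left]⟩

theorem edgeInDir_unique {i j : Fin n} {e : Sym2 (Finset (Fin n))}
    (hi : edgeInDir i e) (hj : edgeInDir j e) : i = j := by
  induction e using Sym2.ind with
  | _ A B =>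
    rw [edgeInDir_mk_iff] at hi hj
    exact singleton_injective (hi.symm.trans hj)

theorem cube_adj_iff_edgeInDir {A B : Finset (Fin n)} :
    (cube n).Adj A B ↔ ∃ i, edgeInDir i s(A, B) := by
  simp only [edgeInDir_mk_iff]
  exact card_eq_one

theorem sum_dirCount (T : SimpleGraph (Finset (Fin n))) (S : Finset (Fin n)) :
    ∑ i ∈ S, dirCount T i = {e | e ∈ T.edgeSet ∧ ∃ i ∈ S, edgeInDir i e}.ncard := by
  classical
  have hdir : ∀ i, dirCount T i = #{e ∈ T.edgeFinset | edgeInDir i e} := fun i => by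
    rw [dirCount, ← Set.ncard_coe_finset]; simp
  have hunion : {e | e ∈ T.edgeSet ∧ ∃ i ∈ S, edgeInDir i e}
      = ↑(S.biUnion fun i => {e ∈ T.edgeFinset | edgeInDir i e}) := by
    ext e; simp
  rw [hunion, Set.ncard_coe_finset, card_biUnion]
  · exact sum_congr rfl fun i _ => hdir i
  · intro i _ j _ hij
    simp only [Finset.disjoint_left, mem_filter]
    exact fun e hi hj => hij (edgeInDir_unique hi.2 hj.2)

theorem sum_dirCount_univ {T : SimpleGraph (Finset (Fin n))} (hT : T ≤ cube n) :
    ∑ i, dirCount T i = T.edgeSet.ncard := by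
  rw [sum_dirCount]
  congr 1
  ext e
  induction e using Sym2.ind with
  | _ A B =>
    simpa using fun he => cube_adj_iff_edgeInDir.mp (hT he)

theorem IsSpanningTreeOf.ncard_edgeSet {T : SimpleGraph (Finset (Fin n))}
    (hT : IsSpanningTreeOf T (cube n)) : T.edgeSet.ncard = 2 ^ n - 1 := by
  have := (isTree_iff_connected_and_card.mp hT.2).2
  rw [Nat.card_coe_set_eq, Nat.card_eq_fintype_card, Fintype.card_finset, Fintype.card_fin] at this
  omega

end Cube

section SectionTree

variable {n : ℕ} {ψ : Finset (Fin n) → Fin n}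

theorem ncard_setOf_nonempty : {X : Finset (Fin n) | X.Nonempty}.ncard = 2 ^ n - 1 := by
  have : {X : Finset (Fin n) | X.Nonempty} = ↑((univ : Finset (Fin n)).powerset.erase ∅) := by
    ext X; simp [nonempty_iff_ne_empty]
  rw [this, Set.ncard_coe_finset, card_powerset_erase_empty, card_univ, Fintype.card_fin]

def sectionEdge (ψ : Finset (Fin n) → Fin n) (X : Finset (Fin n)) : Sym2 (Finset (Fin n)) :=
  s(X, X.erase (ψ X))

def sectionTree (ψ : Finset (Fin n) → Fin n) : SimpleGraph (Finset (Fin n)) :=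
  SimpleGraph.fromEdgeSet (sectionEdge ψ '' {X | X.Nonempty})

namespace IsSection

variable (hψ : IsSection ψ)
include hψ

theorem erase_ne {X : Finset (Fin n)} (hX : X.Nonempty) : X.erase (ψ X) ≠ X :=
  (erase_ssubset (hψ X hX)).ne

theorem injOn_sectionEdge : Set.InjOn (sectionEdge ψ) {X | X.Nonempty} := by
  intro X hX Y hY h
  rcases Sym2.eq_iff.mp h with ⟨h, -⟩ | ⟨hXY, hYX⟩
  · exact h
  · have hX' := card_erase_lt_of_mem (hψ X hX)
    have hY' := card_erase_lt_of_mem (hψ Y hY)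
    rw [hYX] at hX'
    rw [← hXY] at hY'
    omega

theorem edgeSet_sectionTree : (sectionTree ψ).edgeSet = sectionEdge ψ '' {X | X.Nonempty} := by
  rw [sectionTree, SimpleGraph.edgeSet_fromEdgeSet, sdiff_eq_left, Set.disjoint_left]
  rintro e ⟨X, hX, rfl⟩ hdiag
  exact hψ.erase_ne hX (Sym2.mk_isDiag_iff.mp hdiag).symm

theorem sectionTree_adj_erase {X : Finset (Fin n)} (hX : X.Nonempty) :
    (sectionTree ψ).Adj X (X.erase (ψ X)) :=
  (fromEdgeSet_adj _).mpr ⟨⟨X, hX, rfl⟩, (hψ.erase_ne hX).symm⟩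

theorem edgeInDir_sectionEdge {X : Finset (Fin n)} (hX : X.Nonempty) {i : Fin n} :
    edgeInDir i (sectionEdge ψ X) ↔ ψ X = i := by
  rw [sectionEdge, edgeInDir_mk_iff, symmDiff_of_ge (erase_subset _ _),
    sdiff_erase_self (hψ X hX), singleton_inj]

theorem sectionTree_le_cube : sectionTree ψ ≤ cube n := by
  intro A B hAB
  obtain ⟨⟨X, hX, hXe⟩, -⟩ := (fromEdgeSet_adj _).mp hAB
  exact cube_adj_iff_edgeInDir.mpr ⟨ψ X, hXe ▸ (hψ.edgeInDir_sectionEdge hX).mpr rfl⟩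

theorem sectionTree_connected : (sectionTree ψ).Connected := by
  have reach : ∀ X, (sectionTree ψ).Reachable X ∅ := by
    intro X
    induction X using Finset.strongInduction with
    | H X ih =>
      rcases X.eq_empty_or_nonempty with rfl | hX
      · rfl
      · exact (hψ.sectionTree_adj_erase hX).reachable.trans (ih _ (erase_ssubset (hψ X hX)))
  exact ⟨fun A B => (reach A).trans (reach B).symm⟩

theorem isTree_sectionTree : (sectionTree ψ).IsTree := by
  refine SimpleGraph.isTree_iff_connected_and_card.mpr ⟨hψ.sectionTree_connected, ?_⟩
  rw [Nat.card_coe_set_eq, hψ.edgeSet_sectionTree, hψ.injOn_sectionEdge.ncard_image,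
    ncard_setOf_nonempty, Nat.card_eq_fintype_card, Fintype.card_finset, Fintype.card_fin]
  have := Nat.one_le_two_pow (n := n)
  omega

theorem dirCount_sectionTree (i : Fin n) : dirCount (sectionTree ψ) i = secCount ψ i := by
  have : {e | e ∈ (sectionTree ψ).edgeSet ∧ edgeInDir i e}
      = sectionEdge ψ '' {X | X.Nonempty ∧ ψ X = i} := by
    ext e
    rw [Set.mem_ofPred_eq, hψ.edgeSet_sectionTree]
    constructor
    · rintro ⟨⟨X, hX, rfl⟩, hi⟩
      exact ⟨X, ⟨hX, (hψ.edgeInDir_sectionEdge hX).mp hi⟩, rfl⟩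
    · rintro ⟨X, ⟨hX, rfl⟩, rfl⟩
      exact ⟨⟨X, hX, rfl⟩, (hψ.edgeInDir_sectionEdge hX).mpr rfl⟩
  rw [dirCount, this, (hψ.injOn_sectionEdge.mono fun X hX => hX.1).ncard_image,
    secCount]

theorem isSignature {a : Fin n → ℕ} (ha : ∀ i, secCount ψ i = a i) : IsSignature n a :=
  ⟨sectionTree ψ, ⟨hψ.sectionTree_le_cube, hψ.isTree_sectionTree⟩,
    fun i => (hψ.dirCount_sectionTree i).trans (ha i)⟩

end IsSection

end SectionTree

section Projection

variable {n : ℕ} {T : SimpleGraph (Finset (Fin n))}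

def projVert (S U : Finset (Fin n)) : ↥{W : Finset (Fin n) | W ⊆ S} :=
  ⟨U ∩ S, inter_subset_right⟩

theorem projVert_surjective (S : Finset (Fin n)) : Function.Surjective (projVert S) :=
  fun W => ⟨W, Subtype.ext (inter_eq_left.mpr W.2)⟩

theorem nat_card_setOf_subset (S : Finset (Fin n)) :
    Nat.card ↥{W : Finset (Fin n) | W ⊆ S} = 2 ^ #S := by
  rw [← card_powerset, ← Set.ncard_coe_finset, ← Nat.card_coe_set_eq]
  congr
  ext W
  simp

theorem connected_projTree (hT : T.Connected) (S : Finset (Fin n)) :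
    (projTree n S T).Connected :=
  hT.of_surjective_of_adj (projVert_surjective S) fun U V hUV => by
    by_cases h : projVert S U = projVert S V
    · exact .inl h
    · exact .inr ⟨fun h' => h (Subtype.ext h'), U, V, hUV, rfl, rfl⟩

theorem inter_eq_inter_of_edgeInDir {U V S : Finset (Fin n)} {i : Fin n}
    (h : edgeInDir i s(U, V)) (hi : i ∉ S) : U ∩ S = V ∩ S := by
  rw [edgeInDir_mk_iff] at h
  ext x
  have := congrArg (x ∈ ·) h
  grind [mem_symmDiff]

theorem nat_card_edgeSet_projTree_le (hT : T ≤ cube n) (S : Finset (Fin n)) :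
    Nat.card (projTree n S T).edgeSet ≤ {e | e ∈ T.edgeSet ∧ ∃ i ∈ S, edgeInDir i e}.ncard := by
  have hsub : (projTree n S T).edgeSet
      ⊆ Sym2.map (projVert S) '' {e | e ∈ T.edgeSet ∧ ∃ i ∈ S, edgeInDir i e} := by
    intro e he
    induction e using Sym2.ind with
    | _ A B =>
      obtain ⟨hAB, U, V, hUV, hU, hV⟩ := he
      obtain ⟨i, hi⟩ := cube_adj_iff_edgeInDir.mp (hT hUV)
      have hiS : i ∈ S := by
        by_contra hiS
        exact hAB (hU ▸ hV ▸ inter_eq_inter_of_edgeInDir hi hiS)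
      refine ⟨s(U, V), ⟨hUV, i, hiS, hi⟩, ?_⟩
      rw [Sym2.map_mk, show projVert S U = A from Subtype.ext hU,
        show projVert S V = B from Subtype.ext hV]
  rw [Nat.card_coe_set_eq]
  exact (Set.ncard_le_ncard hsub (Set.toFinite _)).trans (Set.ncard_image_le (Set.toFinite _))

theorem two_pow_card_sub_one_le_sum_dirCount (hT : IsSpanningTreeOf T (cube n))
    (S : Finset (Fin n)) : 2 ^ #S - 1 ≤ ∑ i ∈ S, dirCount T i := by
  have := (connected_projTree hT.2.connected S).card_vert_le_card_edgeSet_add_one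
  rw [nat_card_setOf_subset] at this
  have := nat_card_edgeSet_projTree_le hT.1 S
  rw [sum_dirCount]
  omega

end Projection

section Hall

variable {n : ℕ} {a : Fin n → ℕ}

def slots (a : Fin n → ℕ) (U : Finset (Fin n)) : Finset (Σ _ : Fin n, ℕ) :=
  U.sigma fun i => range (a i)

theorem card_slots (U : Finset (Fin n)) : #(slots a U) = ∑ i ∈ U, a i := by
  simp [slots]

theorem exists_injective_slots (hS : ∀ S : Finset (Fin n), 2 ^ #S - 1 ≤ ∑ i ∈ S, a i) :
    ∃ f : {X : Finset (Fin n) // X.Nonempty} → Σ _ : Fin n, ℕ,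
      Function.Injective f ∧ ∀ X, f X ∈ slots a X.1 := by
  refine (all_card_le_biUnion_card_iff_exists_injective _).mp fun s => ?_
  set U := s.biUnion Subtype.val
  have hunion : s.biUnion (fun X => slots a X.1) = slots a U := by
    ext
    simp only [slots, U, mem_biUnion, mem_sigma]
    grind
  calc #s ≤ #(U.powerset.erase ∅) := by
        refine card_le_card_of_injOn Subtype.val (fun X hX => ?_) Subtype.val_injective.injOn
        rw [coe_erase, Set.mem_sdiff_singleton, mem_coe, mem_powerset]
        exact ⟨subset_biUnion_of_mem _ hX, X.2.ne_empty⟩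
    _ = 2 ^ #U - 1 := card_powerset_erase_empty U
    _ ≤ ∑ i ∈ U, a i := hS U
    _ = #(s.biUnion fun X => slots a X.1) := by rw [hunion, card_slots]

theorem card_subtype_nonempty : Fintype.card {X : Finset (Fin n) // X.Nonempty} = 2 ^ n - 1 := by
  rw [← Nat.card_eq_fintype_card]
  exact (Nat.card_coe_set_eq _).trans ncard_setOf_nonempty

theorem exists_section_of_le_sum (hn : 1 ≤ n) (htot : ∑ i, a i = 2 ^ n - 1)
    (hS : ∀ S : Finset (Fin n), 2 ^ #S - 1 ≤ ∑ i ∈ S, a i) :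
    ∃ ψ : Finset (Fin n) → Fin n, IsSection ψ ∧ ∀ i, secCount ψ i = a i := by
  obtain ⟨f, hf, hfa⟩ := exists_injective_slots hS
  set ψ : Finset (Fin n) → Fin n := fun X => if h : X.Nonempty then (f ⟨X, h⟩).1 else ⟨0, hn⟩
  have hψ (X : {X : Finset (Fin n) // X.Nonempty}) : ψ X = (f X).1 := dif_pos X.2
  have hcount (i : Fin n) : secCount ψ i = #{X | (f X).1 = i} := by
    rw [secCount, ← Set.ncard_coe_finset, ← Subtype.val_injective.injOn.ncard_image]
    congr
    ext X
    simp only [Set.mem_ofPred_eq, coe_filter, mem_univ, true_and, Subtype.exists,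
      exists_and_right, exists_eq_right]
    exact ⟨fun ⟨hX, h⟩ => ⟨hX, (hψ ⟨X, hX⟩).symm.trans h⟩, fun ⟨hX, h⟩ => ⟨hX, (hψ ⟨X, hX⟩).trans h⟩⟩
  have hle (i : Fin n) : #{X | (f X).1 = i} ≤ a i :=
    calc #{X | (f X).1 = i} ≤ #(slots a {i}) := by
          refine card_le_card_of_injOn f (fun X hX => ?_) hf.injOn
          exact mem_sigma.mpr ⟨mem_singleton.mpr (mem_filter.mp hX).2, (mem_sigma.mp (hfa X)).2⟩
      _ = a i := by rw [card_slots, sum_singleton]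
  have hsum : ∑ i, #{X | (f X).1 = i} = ∑ i, a i := by
    rw [← card_eq_sum_card_fiberwise fun _ _ => mem_univ _, card_univ, card_subtype_nonempty, htot]
  refine ⟨ψ, fun X hX => ?_, fun i => ?_⟩
  · exact hψ ⟨X, hX⟩ ▸ (mem_sigma.mp (hfa _)).1
  · rw [hcount]
    exact (sum_eq_sum_iff_of_le fun i _ => hle i).mp hsum i (mem_univ i)

end Hall

theorem IsSignature.exists_section {n : ℕ} (hn : 1 ≤ n) {a : Fin n → ℕ} (ha : IsSignature n a) :
    ∃ ψ : Finset (Fin n) → Fin n, IsSection ψ ∧ ∀ i, secCount ψ i = a i := by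
  obtain ⟨T, hT, hTa⟩ := ha
  have hsum (S : Finset (Fin n)) : ∑ i ∈ S, dirCount T i = ∑ i ∈ S, a i :=
    sum_congr rfl fun i _ => hTa i
  refine exists_section_of_le_sum hn ?_ fun S => hsum S ▸ two_pow_card_sub_one_le_sum_dirCount hT S
  rw [← hsum, sum_dirCount_univ hT.1, hT.ncard_edgeSet]

/-- Lemma: signatures of trees are signatures of sections.
An `n`-tuple is the signature of a spanning tree of `Q_n` iff it is the signature of a
section of the set of nonempty subsets of `[n]`. -/
theorem stmt1 (n : ℕ) (hn : 1 ≤ n) (a : Fin n → ℕ) :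
    IsSignature n a ↔
      ∃ ψ : Finset (Fin n) → Fin n, IsSection ψ ∧ ∀ i, secCount ψ i = a i :=
  ⟨fun ha => ha.exists_section hn, fun ⟨_, hψ, ha⟩ => hψ.isSignature ha⟩
end

section
/- Let S = (a_1, ..., a_n) be an ordered signature of Q_n, i.e. a signature with a_1 ≤ a_2 ≤ ... ≤ a_n. Then a_i ≥ i for all i ∈ [n]. -/
open SimpleGraph

/-!
Projecting a spanning tree `T` of `Q_n` along `X ↦ X ∩ K` gives a connected graph on the
`2 ^ |K|` subsets of `K`, each of whose edges is the image of an edge of `T` in a direction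
of `K`. Hence `Σ_{i ∈ K} a_i ≥ 2 ^ |K| - 1`; for `K` the first `i` directions of an ordered
signature this gives `i a_i ≥ 2 ^ i - 1 > i (i - 1)`.
-/

namespace SimpleGraph

variable {V W : Type*} {G : SimpleGraph V} {H : SimpleGraph W}

theorem Reachable.map_of_adj_reachable (f : V → W)
    (hf : ∀ u v, G.Adj u v → H.Reachable (f u) (f v)) {u v : V} (h : G.Reachable u v) :
    H.Reachable (f u) (f v) := by
  rw [reachable_iff_reflTransGen] at h ⊢
  exact Relation.ReflTransGen.lift' f
    (fun u v huv => (reachable_iff_reflTransGen _ _).1 (hf u v huv)) _ _ h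

theorem Connected.of_surjective_of_adj_reachable (hG : G.Connected) (f : V → W)
    (hsurj : Function.Surjective f) (hf : ∀ u v, G.Adj u v → H.Reachable (f u) (f v)) :
    H.Connected where
  preconnected x y := by
    obtain ⟨u, rfl⟩ := hsurj x
    obtain ⟨v, rfl⟩ := hsurj y
    exact (hG u v).map_of_adj_reachable f hf
  nonempty := hG.nonempty.map f

end SimpleGraph

theorem Finset.natCard_setOf_subset {α : Type*} (R : Finset α) :
    Nat.card {W : Finset α | W ⊆ R} = 2 ^ R.card := by
  have hpow : {W : Finset α | W ⊆ R} = (R.powerset : Set (Finset α)) := by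
    ext W
    simp
  rw [Nat.card_coe_set_eq, hpow, Set.ncard_coe_finset, Finset.card_powerset]

theorem cube_adj_iff {n : ℕ} {X Y : Finset (Fin n)} :
    (cube n).Adj X Y ↔ ∃ i, Y = symmDiff X {i} := by
  change (symmDiff X Y).card = 1 ↔ _
  rw [Finset.card_eq_one]
  refine exists_congr fun i => ⟨fun h => ?_, fun h => ?_⟩
  · rw [← h, symmDiff_symmDiff_cancel_left]
  · rw [h, symmDiff_symmDiff_cancel_left]

theorem exists_edgeInDir_of_cube_adj {n : ℕ} {R U V : Finset (Fin n)} (h : (cube n).Adj U V)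
    (hR : U ∩ R ≠ V ∩ R) : ∃ i ∈ R, edgeInDir i s(U, V) := by
  obtain ⟨i, rfl⟩ := cube_adj_iff.1 h
  refine ⟨i, ?_, U, rfl⟩
  by_contra hi
  apply hR
  change U ⊓ R = (symmDiff U {i}) ⊓ R
  rw [inf_symmDiff_distrib_right]
  change U ∩ R = symmDiff (U ∩ R) ({i} ∩ R)
  rw [Finset.singleton_inter_of_notMem hi, ← Finset.bot_eq_empty, symmDiff_bot]

section Projection

variable {n : ℕ} (R : Finset (Fin n)) {T : SimpleGraph (Finset (Fin n))}

theorem projTree_connected (hT : T.Connected) : (projTree n R T).Connected := by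
  refine hT.of_surjective_of_adj_reachable
    (fun X => ⟨X ∩ R, Finset.inter_subset_right⟩) (fun A => ⟨A, ?_⟩) fun U V hUV => ?_
  · exact Subtype.ext (Finset.inter_eq_left.2 A.2)
  · by_cases h : U ∩ R = V ∩ R
    · simp only [h]
      rfl
    · exact Adj.reachable ⟨h, U, V, hUV, rfl, rfl⟩

theorem natCard_edgeSet_projTree_le (hT : T ≤ cube n) :
    Nat.card (projTree n R T).edgeSet ≤ (projEdges R T).ncard := by
  rw [Nat.card_coe_set_eq]
  refine Set.ncard_le_ncard_of_injOn (Sym2.map Subtype.val) ?_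
    (Sym2.map.injective Subtype.val_injective).injOn (Set.toFinite _)
  intro e he
  induction e using Sym2.ind with
  | _ A B =>
    obtain ⟨hAB, U, V, hUV, hU, hV⟩ := he
    refine ⟨s(U, V), hUV, exists_edgeInDir_of_cube_adj (hT hUV) ?_, ?_⟩
    · rwa [hU, hV]
    · rw [Sym2.map_mk, Sym2.map_mk, hU, hV]

theorem ncard_projEdges_le : (projEdges R T).ncard ≤ ∑ i ∈ R, dirCount T i := by
  have hsub : projEdges R T ⊆
      Sym2.map (· ∩ R) '' ⋃ i ∈ R, {e | e ∈ T.edgeSet ∧ edgeInDir i e} := by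
    rintro _ ⟨e, he, ⟨i, hi, hdir⟩, rfl⟩
    exact ⟨e, Set.mem_biUnion hi ⟨he, hdir⟩, rfl⟩
  calc (projEdges R T).ncard
      ≤ (⋃ i ∈ R, {e | e ∈ T.edgeSet ∧ edgeInDir i e}).ncard :=
        (Set.ncard_le_ncard hsub (Set.toFinite _)).trans (Set.ncard_image_le (Set.toFinite _))
    _ ≤ ∑ i ∈ R, dirCount T i := R.set_ncard_biUnion_le _

end Projection

theorem IsSignature.two_pow_card_le_sum_add_one {n : ℕ} {a : Fin n → ℕ} (hsig : IsSignature n a)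
    (R : Finset (Fin n)) : 2 ^ R.card ≤ ∑ i ∈ R, a i + 1 := by
  obtain ⟨T, ⟨hle, htree⟩, hT⟩ := hsig
  calc 2 ^ R.card = Nat.card {W : Finset (Fin n) | W ⊆ R} := R.natCard_setOf_subset.symm
    _ ≤ Nat.card (projTree n R T).edgeSet + 1 :=
        (projTree_connected R htree.connected).card_vert_le_card_edgeSet_add_one
    _ ≤ ∑ i ∈ R, dirCount T i + 1 := by
        grw [natCard_edgeSet_projTree_le R hle, ncard_projEdges_le R]
    _ = ∑ i ∈ R, a i + 1 := by rw [Finset.sum_congr rfl fun i _ => hT i]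

theorem succ_mul_add_two_le_two_pow (i : ℕ) : (i + 1) * i + 2 ≤ 2 ^ (i + 1) := by
  induction i with
  | zero => simp
  | succ k ih =>
    rw [pow_succ]
    nlinarith [Nat.le_mul_self k]

/-- Indices are `0`-based: `i : Fin n` is the paper's `i + 1`. -/
theorem stmt2 (n : ℕ) (a : Fin n → ℕ) (hsig : IsSignature n a) (hmono : Monotone a) :
    ∀ i : Fin n, (i : ℕ) + 1 ≤ a i := by
  intro i
  have hcard : (Finset.Iic i).card = (i : ℕ) + 1 := Fin.card_Iic i
  have hlower := hsig.two_pow_card_le_sum_add_one (Finset.Iic i)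
  have hupper : ∑ j ∈ Finset.Iic i, a j ≤ ((i : ℕ) + 1) * a i := by
    calc ∑ j ∈ Finset.Iic i, a j ≤ ∑ _j ∈ Finset.Iic i, a i :=
          Finset.sum_le_sum fun j hj => hmono (Finset.mem_Iic.mp hj)
      _ = ((i : ℕ) + 1) * a i := by rw [Finset.sum_const, hcard, smul_eq_mul]
  by_contra! hsmall
  have := succ_mul_add_two_le_two_pow i
  rw [hcard] at hlower
  nlinarith
end
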